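/- Let p₁ : ℝ^{2n} → ℝ be C² with p₁ ≥ 0 and ‖p₁''‖ ≤ M, let h ∈ (0,1] and λ : ℝ^{2n} → [1,∞). Define μ²(X) = p₁(X) + (hλ(X))^{2/3}. Then for all X, Y: p₁(Y) ≤ C(p₁(X) + (hλ(X))^{2/3})(1 + h^{−2/3}|X−Y|²), for a constant C depending only on M. -/

import Mathlib

theorem quad_bound_aux {E : Type*} [NormedAddCommGroup E] [NormedSpace ℝ E]
    (M : ℝ) (hM : 0 ≤ M) (p : E → ℝ) (hp : ContDiff ℝ 2 p)
    (hpos : ∀ x, 0 ≤ p x) (hbd : ∀ x, ‖iteratedFDeriv ℝ 2 p x‖ ≤ M)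
    (X Y : E) : p Y ≤ 2 * p X + 2 * (M * ‖Y - X‖ ^ 2) := by
  set v : E := Y - X with hv
  have hdiff : Differentiable ℝ p := hp.differentiable (by norm_num)
  have hd1 : ContDiff ℝ 1 (fderiv ℝ p) := hp.fderiv_right (by norm_num)
  -- second derivative bound
  have hbd2 : ∀ x : E, ‖fderiv ℝ (fderiv ℝ p) x‖ ≤ M := by
    intro x
    refine ContinuousLinearMap.opNorm_le_bound _ hM fun u => ?_
    refine ContinuousLinearMap.opNorm_le_bound _ (by positivity) fun w => ?_
    have h2 : iteratedFDeriv ℝ 2 p x ![u, w] = fderiv ℝ (fderiv ℝ p) x u w := by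
      rw [iteratedFDeriv_two_apply]; simp
    calc ‖fderiv ℝ (fderiv ℝ p) x u w‖ = ‖iteratedFDeriv ℝ 2 p x ![u, w]‖ := by rw [h2]
      _ ≤ ‖iteratedFDeriv ℝ 2 p x‖ * (‖u‖ * ‖w‖) := by
          have := (iteratedFDeriv ℝ 2 p x).le_opNorm ![u, w]
          simpa [Fin.prod_univ_two, mul_assoc] using this
      _ ≤ M * (‖u‖ * ‖w‖) := by
          exact mul_le_mul_of_nonneg_right (hbd x) (by positivity)
      _ = M * ‖u‖ * ‖w‖ := by ring
  have hlip : ∀ a b : E, ‖fderiv ℝ p a - fderiv ℝ p b‖ ≤ M * ‖a - b‖ := by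
    intro a b
    exact (convex_univ).norm_image_sub_le_of_norm_fderiv_le
      (fun x _ => (hd1.differentiable one_ne_zero).differentiableAt)
      (fun x _ => hbd2 x) (Set.mem_univ b) (Set.mem_univ a)
  set L : ℝ := fderiv ℝ p X v with hL
  set ψ : ℝ → ℝ := fun t => p (X + t • v) - t * L with hψ
  have hc : ∀ t : ℝ, HasDerivAt (fun t : ℝ => X + t • v) v t := by
    intro t
    have := ((hasDerivAt_id t).smul_const v).const_add X
    simpa using this
  have hg : ∀ t : ℝ, HasDerivAt (fun t : ℝ => p (X + t • v))
      ((fderiv ℝ p (X + t • v)) v) t := fun t =>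
    (hdiff (X + t • v)).hasFDerivAt.comp_hasDerivAt t (hc t)
  have hψ' : ∀ t : ℝ, HasDerivAt ψ ((fderiv ℝ p (X + t • v)) v - L) t := fun t =>
    (hg t).sub (hasDerivAt_mul_const L)
  have hbound : ∀ t ∈ Set.Icc (-1 : ℝ) 1,
      ‖(fderiv ℝ p (X + t • v)) v - L‖ ≤ M * ‖v‖ ^ 2 := by
    intro t ht
    have h1 : ‖(fderiv ℝ p (X + t • v)) v - L‖
        ≤ ‖fderiv ℝ p (X + t • v) - fderiv ℝ p X‖ * ‖v‖ := by
      have := (fderiv ℝ p (X + t • v) - fderiv ℝ p X).le_opNorm v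
      simpa using this
    have h2 : ‖fderiv ℝ p (X + t • v) - fderiv ℝ p X‖ ≤ M * (|t| * ‖v‖) := by
      have := hlip (X + t • v) X
      simpa [norm_smul] using this
    have h3 : |t| ≤ 1 := abs_le.2 ⟨ht.1, ht.2⟩
    calc ‖(fderiv ℝ p (X + t • v)) v - L‖ ≤ M * (|t| * ‖v‖) * ‖v‖ :=
          h1.trans (mul_le_mul_of_nonneg_right h2 (norm_nonneg v))
      _ ≤ M * (1 * ‖v‖) * ‖v‖ := by gcongr
      _ = M * ‖v‖ ^ 2 := by ring
  have key : ∀ t ∈ Set.Icc (-1 : ℝ) 1, ‖ψ t - ψ 0‖ ≤ M * ‖v‖ ^ 2 * ‖t - 0‖ := by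
    intro t ht
    exact (convex_Icc (-1 : ℝ) 1).norm_image_sub_le_of_norm_hasDerivWithin_le
      (fun s _ => (hψ' s).hasDerivWithinAt) hbound
      (by constructor <;> norm_num) ht
  have hK : (0 : ℝ) ≤ M * ‖v‖ ^ 2 := by positivity
  have hψ0 : ψ 0 = p X := by simp [hψ]
  have e1 : ψ 1 = p Y - L := by simp [hψ, hv]
  have e2 : ψ (-1) = p (X + (-1 : ℝ) • v) + L := by simp [hψ]
  have k1 : |ψ 1 - ψ 0| ≤ M * ‖v‖ ^ 2 := by
    have := key 1 (by constructor <;> norm_num)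
    simpa using this
  have k2 : |ψ (-1) - ψ 0| ≤ M * ‖v‖ ^ 2 := by
    have := key (-1) (by constructor <;> norm_num)
    simpa using this
  have hpm : 0 ≤ p (X + (-1 : ℝ) • v) := hpos _
  rw [hψ0, e1] at k1
  rw [hψ0, e2] at k2
  have a1 := abs_le.1 k1
  have a2 := abs_le.1 k2
  -- from a2 : p(X - v) + L - p X ≤ K, and p(X-v) ≥ 0, get L ≤ p X + K
  -- from a1 : p Y - L - p X ≤ K, get p Y ≤ p X + L + K ≤ 2 p X + 2 K
  linarith [a1.2, a2.2]

theorem stmt11 (M : ℝ) (hM : 0 ≤ M) :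
    ∃ C : ℝ, 0 < C ∧ ∀ (n : ℕ) (h : ℝ), 0 < h → h ≤ 1 →
      ∀ lam : EuclideanSpace ℝ (Fin (2*n)) → ℝ, (∀ X, 1 ≤ lam X) →
      ∀ p₁ : EuclideanSpace ℝ (Fin (2*n)) → ℝ, ContDiff ℝ 2 p₁ → (∀ X, 0 ≤ p₁ X) →
        (∀ X, ‖iteratedFDeriv ℝ 2 p₁ X‖ ≤ M) →
        ∀ X Y, p₁ Y ≤
          C * (p₁ X + (h * lam X) ^ ((2:ℝ)/3)) * (1 + h ^ (-(2:ℝ)/3) * ‖X - Y‖ ^ 2) := by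
  refine ⟨2 * M + 2, by linarith, ?_⟩
  intro n h hh hh1 lam hlam p₁ hp₁ hpos hbd X Y
  have key := quad_bound_aux M hM p₁ hp₁ hpos hbd X Y
  set s : ℝ := ‖X - Y‖ ^ 2 with hs
  have hsYX : ‖Y - X‖ ^ 2 = s := by rw [hs, norm_sub_rev]
  rw [hsYX] at key
  set w : ℝ := (h * lam X) ^ ((2:ℝ)/3) with hw
  set a : ℝ := h ^ (-(2:ℝ)/3) with ha
  have hwpos : 0 < w := Real.rpow_pos_of_pos (by nlinarith [hlam X]) _
  have hapos : 0 < a := Real.rpow_pos_of_pos hh _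
  have hwa : 1 ≤ w * a := by
    have h1 : h ^ ((2:ℝ)/3) ≤ w := by
      apply Real.rpow_le_rpow hh.le (by nlinarith [hlam X]) (by norm_num)
    have h2 : a = (h ^ ((2:ℝ)/3))⁻¹ := by
      rw [ha, show (-(2:ℝ)/3) = -((2:ℝ)/3) by ring, Real.rpow_neg hh.le]
    have h3 : 0 < h ^ ((2:ℝ)/3) := Real.rpow_pos_of_pos hh _
    rw [h2]
    calc (1:ℝ) = h ^ ((2:ℝ)/3) * (h ^ ((2:ℝ)/3))⁻¹ := by field_simp
      _ ≤ w * (h ^ ((2:ℝ)/3))⁻¹ := by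
          apply mul_le_mul_of_nonneg_right h1 (by positivity)
  have hsnn : (0:ℝ) ≤ s := by positivity
  have hpX : 0 ≤ p₁ X := hpos X
  have h4 : s ≤ w * a * s := by
    have := mul_le_mul_of_nonneg_right hwa hsnn
    linarith
  nlinarith [mul_nonneg hM (sub_nonneg.2 h4), mul_nonneg hpX hsnn,
    mul_nonneg hpX (mul_nonneg hapos.le hsnn),
    mul_nonneg hM (mul_nonneg hpX (mul_nonneg hapos.le hsnn)),
    mul_nonneg hM hpX, mul_nonneg hM hwpos.le]
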